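/- Let λ ∈ ℕ and n₁, n₂, n₃, m₁, m₂ ∈ ℤ with n₂ = m₁ + m₂ and the Gelfand–Tsetlin inequalities 0 ≤ m₂ ≤ n₃ ≤ λ, n₃ ≤ m₁ ≤ λ, m₂ ≤ n₁ ≤ m₁. Then the product of 'normalized e' and 'normalized f' squared coefficients satisfies: (m₁+2)(λ−m₁)(m₁−n₁+1)(m₁−n₃+1)/((m₁−m₂+2)(m₁−m₂+1)) + (m₂+1)(λ−m₂+1)(n₁−m₂)(n₃−m₂)/((m₁−m₂)(m₁−m₂+1)) − (m₁+1)(λ−m₁+1)(m₁−n₁)(m₁−n₃)/((m₁−m₂+1)(m₁−m₂)) − m₂(λ−m₂+2)(n₁−m₂+1)(n₃−m₂+1)/((m₁−m₂+1)(m₁−m₂+2)) = λ − 2(m₁+m₂) + n₁ + n₃, provided m₁ > m₂ (so all denominators are nonzero when m₁ − m₂ ≥ 1; when m₁ = m₂ interpret the terms with the vanishing numerator factors (n₁−m₂)(n₃−m₂) and (m₁−n₁)(m₁−n₃) as zero). -/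
import Mathlib


/-- Eigenvalue of the commutator `[e₀^{(2)}, f₀^{(2)}]` on a Gelfand–Tsetlin
pattern of the `(0,λ,0)` representation of `Y(sl₄)`. -/
theorem sl4_commutator_eigenvalue (lam : ℕ) (n₁ n₂ n₃ m₁ m₂ : ℤ)
    (hsum : n₂ = m₁ + m₂)
    (h0 : 0 ≤ m₂) (h1 : m₂ ≤ n₃) (h2 : n₃ ≤ (lam : ℤ))
    (h3 : n₃ ≤ m₁) (h4 : m₁ ≤ (lam : ℤ))
    (h5 : m₂ ≤ n₁) (h6 : n₁ ≤ m₁) (h7 : m₂ < m₁) :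
    ((m₁ : ℚ) + 2) * ((lam : ℚ) - m₁) * ((m₁ : ℚ) - n₁ + 1) * ((m₁ : ℚ) - n₃ + 1) /
        (((m₁ : ℚ) - m₂ + 2) * ((m₁ : ℚ) - m₂ + 1))
      + ((m₂ : ℚ) + 1) * ((lam : ℚ) - m₂ + 1) * ((n₁ : ℚ) - m₂) * ((n₃ : ℚ) - m₂) /
        (((m₁ : ℚ) - m₂) * ((m₁ : ℚ) - m₂ + 1))
      - ((m₁ : ℚ) + 1) * ((lam : ℚ) - m₁ + 1) * ((m₁ : ℚ) - n₁) * ((m₁ : ℚ) - n₃) /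
        (((m₁ : ℚ) - m₂ + 1) * ((m₁ : ℚ) - m₂))
      - (m₂ : ℚ) * ((lam : ℚ) - m₂ + 2) * ((n₁ : ℚ) - m₂ + 1) * ((n₃ : ℚ) - m₂ + 1) /
        (((m₁ : ℚ) - m₂ + 1) * ((m₁ : ℚ) - m₂ + 2))
      = (lam : ℚ) - 2 * ((m₁ : ℚ) + (m₂ : ℚ)) + (n₁ : ℚ) + (n₃ : ℚ) := by
  have hd : ((m₁ : ℚ) - m₂) ≠ 0 := by
    have : (m₂ : ℚ) < m₁ := by exact_mod_cast h7
    linarith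
  have hd1 : ((m₁ : ℚ) - m₂ + 1) ≠ 0 := by
    have : (m₂ : ℚ) < m₁ := by exact_mod_cast h7
    linarith
  have hd2 : ((m₁ : ℚ) - m₂ + 2) ≠ 0 := by
    have : (m₂ : ℚ) < m₁ := by exact_mod_cast h7
    linarith
  field_simp
  ring
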